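/- Fix $\epsilon \in (0,1)$, a prime $p$, an affine constraint $A = (a_1,\dots,a_m)$ in $\ell$ variables, and a polynomial factor $\mathcal{B}$ generated by polynomials $P_1,\dots,P_C : \mathbb{F}_p^n \to \mathbb{F}_p$ of degrees $d_1,\dots,d_C$ (all less than $p$). Assume the following two hypotheses hold: (1) for every coefficient matrix $\Lambda = (\lambda_{i,j})$, either $P_\Lambda(X_1,\dots,X_\ell) := \sum_{i,j}\lambda_{i,j}P_i(a_j(X_1,\dots,X_\ell))$ is the zero polynomial, or $|\mathbb{E}_{x_1,\dots,x_\ell \in \mathbb{F}_p^n}[e^{2\pi i P_\Lambda(x_1,\dots,x_\ell)/p}]| < \epsilon$; (2) $P_\Lambda \equiv 0$ iff $\sum_j \lambda_{i,j} a_j^{\otimes d_i} = 0$ for all $i$, and the number of such $\Lambda$ is $p^{mC - s}$ where $s$ is the $(d_1,\dots,d_C)$-dimension of $A$. Let $b_1,\dots,b_m \in \mathbb{F}_p^C$. If $b_1,\dots,b_m$ are consistent with respect to $A$ and $(d_1,\dots,d_C)$, then $\Pr_{x_1,\dots,x_\ell}[\mathcal{B}(a_1(x_1,\dots,x_\ell))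 = b_1 \wedge \cdots \wedge \mathcal{B}(a_m(x_1,\dots,x_\ell)) = b_m] = p^{-s} \pm \epsilon$. If they are not consistent, this probability is $0$. -/

import Mathlib

/-- The additive character `x ↦ e^{2πi x / p}` of `ZMod p`. -/
noncomputable def chi (p : ℕ) (x : ZMod p) : ℂ :=
  Complex.exp (2 * Real.pi * Complex.I * (x.val : ℂ) / (p : ℂ))

/-- The `d`-th tensor power of a linear form with coefficient vector `α`. -/
def tpow {p : ℕ} (d : ℕ) {V : Type*} (α : V → ZMod p) : (Fin d → V) → ZMod p :=
  fun i => ∏ j, α (i j)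

/-- Consistency of cells `b j` with respect to forms `a` and degrees `d`. -/
def Consistent {p ℓ m C : ℕ} (a : Fin m → Fin ℓ → ZMod p)
    (d : Fin C → ℕ) (b : Fin m → Fin C → ZMod p) : Prop :=
  ∀ lam : Fin C → Fin m → ZMod p,
    (∀ i, ∑ j, lam i j • tpow (p := p) (d i) (a j) = 0) →
    ∀ i, ∑ j, lam i j * b j i = 0

/-!
Expand the indicator of the pattern in the additive character `chi p`: the number of solutions
times `p^{mC}` is `∑_Λ chi(-⟨Λ, b⟩) ∑_x chi(P_Λ(x))`. The `p^{mC-s}` matrices `Λ` with `P_Λ ≡ 0`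
each contribute `p^{nℓ}` when `b` is consistent (then `⟨Λ, b⟩ = 0`); every other `Λ` contributes
at most `ε p^{nℓ}` by the bias hypothesis. If `b` is inconsistent, some `Λ` whose rows lie in the
kernels of `α ↦ α^{⊗d_i}` has a row `i` with `∑_j Λ_{ij} b_{ji} ≠ 0`; keeping only that row still
gives `P_Λ ≡ 0`, and evaluating it at a solution would force `∑_j Λ_{ij} b_{ji} = 0`.
-/

open Finset

lemma chi_eq_stdAddChar {p : ℕ} [NeZero p] (x : ZMod p) : chi p x = ZMod.stdAddChar x := by
  rw [chi, ZMod.stdAddChar_apply, ZMod.toCircle_apply]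

namespace AddChar

lemma map_sum_eq_prod {A M : Type*} [AddCommMonoid A] [CommMonoid M] (ψ : AddChar A M)
    {ι : Type*} (s : Finset ι) (f : ι → A) : ψ (∑ i ∈ s, f i) = ∏ i ∈ s, ψ (f i) := by
  induction s using Finset.cons_induction with
  | empty => simp
  | cons i s hi ih => rw [sum_cons, prod_cons, map_add_eq_mul, ih]

variable {R : Type*} [CommRing R] [Fintype R] [DecidableEq R] {ψ : AddChar R ℂ}
  {ι κ : Type*} [Fintype ι] [Fintype κ] [DecidableEq ι] [DecidableEq κ]

theorem sum_apply_pairing_eq_ite (hψ : ψ.IsPrimitive) (v : ι → κ → R) :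
    ∑ lam : ι → κ → R, ψ (∑ i, ∑ j, lam i j * v i j) =
      if v = 0 then (Nat.card (ι → κ → R) : ℂ) else 0 := by
  have hrow (i : ι) : ∑ r : κ → R, ∏ j, ψ (r j * v i j) =
      ∏ j, if v i j = 0 then (Fintype.card R : ℂ) else 0 := by
    rw [← Fintype.prod_sum (fun j (t : R) => ψ (t * v i j))]
    simp_rw [sum_mulShift _ hψ, Nat.cast_ite, Nat.cast_zero]
  simp_rw [map_sum_eq_prod]
  rw [← Fintype.prod_sum (fun i (r : κ → R) => ∏ j, ψ (r j * v i j))]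
  simp_rw [hrow, Fintype.prod_ite_zero]
  simp [funext_iff, Nat.card_eq_fintype_card, Fintype.card_pi]

end AddChar

section FourierCounting

variable {R : Type*} [CommRing R] [Fintype R] [DecidableEq R] {ψ : AddChar R ℂ}
  {ι κ : Type*} [Fintype ι] [Fintype κ] [DecidableEq ι] [DecidableEq κ]
  {X : Type*} [Fintype X] (F : X → ι → κ → R) (b : ι → κ → R)

theorem card_fiber_mul_card_eq_sum_addChar (hψ : ψ.IsPrimitive) :
    (Nat.card {x // F x = b} : ℂ) * Nat.card (ι → κ → R) =
      ∑ lam : ι → κ → R, ψ (-∑ i, ∑ j, lam i j * b i j) *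
        ∑ x, ψ (∑ i, ∑ j, lam i j * F x i j) := by
  calc (Nat.card {x // F x = b} : ℂ) * Nat.card (ι → κ → R)
      = ∑ x, if F x - b = 0 then (Nat.card (ι → κ → R) : ℂ) else 0 := by
        simp [sub_eq_zero, Nat.card_eq_fintype_card, Fintype.card_subtype, sum_ite]
    _ = ∑ x, ∑ lam : ι → κ → R, ψ (∑ i, ∑ j, lam i j * (F x - b) i j) := by
        simp_rw [AddChar.sum_apply_pairing_eq_ite hψ]
    _ = _ := by
        rw [sum_comm]
        refine sum_congr rfl fun lam _ => ?_
        rw [mul_sum]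
        refine sum_congr rfl fun x _ => ?_
        rw [← AddChar.map_add_eq_mul]
        congr 1
        simp only [Pi.sub_apply, mul_sub, sum_sub_distrib]
        ring

theorem norm_card_fiber_mul_sub_le (hψ : ψ.IsPrimitive) {ε : ℝ} (hε : 0 ≤ ε)
    (hb : ∀ lam : ι → κ → R, (∀ x, ∑ i, ∑ j, lam i j * F x i j = 0) →
      ∑ i, ∑ j, lam i j * b i j = 0)
    (hbias : ∀ lam : ι → κ → R, (∀ x, ∑ i, ∑ j, lam i j * F x i j = 0) ∨
      ‖∑ x, ψ (∑ i, ∑ j, lam i j * F x i j)‖ ≤ ε * Nat.card X) :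
    ‖(Nat.card {x // F x = b} : ℂ) * Nat.card (ι → κ → R) -
        Nat.card {lam : ι → κ → R // ∀ x, ∑ i, ∑ j, lam i j * F x i j = 0} * Nat.card X‖ ≤
      Nat.card (ι → κ → R) * (ε * Nat.card X) := by
  set Z : (ι → κ → R) → Prop := fun lam => ∀ x, ∑ i, ∑ j, lam i j * F x i j = 0
  set S : (ι → κ → R) → ℂ := fun lam =>
    ψ (-∑ i, ∑ j, lam i j * b i j) * ∑ x, ψ (∑ i, ∑ j, lam i j * F x i j)
  have hvanishing : ∀ lam ∈ univ.filter Z, S lam = Nat.card X := fun lam hlam => by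
    have hZ : ∀ x, ∑ i, ∑ j, lam i j * F x i j = 0 := (mem_filter.1 hlam).2
    simp [S, hb lam hZ, hZ, Nat.card_eq_fintype_card]
  have hbiased : ∀ lam ∈ univ.filter (¬ Z ·), ‖S lam‖ ≤ ε * Nat.card X := fun lam hlam => by
    rw [norm_mul, AddChar.norm_apply, one_mul]
    exact (hbias lam).resolve_left (mem_filter.1 hlam).2
  have hZcard : (Nat.card {lam // Z lam} : ℂ) = #(univ.filter Z) := by
    rw [Nat.card_eq_fintype_card, Fintype.card_subtype]
  rw [card_fiber_mul_card_eq_sum_addChar F b hψ, ← sum_filter_add_sum_filter_not univ Z,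
    sum_congr rfl hvanishing, sum_const, nsmul_eq_mul, hZcard, add_sub_cancel_left]
  calc ‖∑ lam ∈ univ.filter (¬ Z ·), S lam‖
      ≤ #(univ.filter (¬ Z ·)) * (ε * Nat.card X) := by
        simpa using norm_sum_le_of_le _ hbiased
    _ ≤ Nat.card (ι → κ → R) * (ε * Nat.card X) := by
        gcongr
        rw [Nat.card_eq_fintype_card]
        exact_mod_cast card_filter_le _ _

theorem abs_card_fiber_div_sub_le [Nonempty X] (hψ : ψ.IsPrimitive) {ε : ℝ} (hε : 0 ≤ ε)
    (hb : ∀ lam : ι → κ → R, (∀ x, ∑ i, ∑ j, lam i j * F x i j = 0) →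
      ∑ i, ∑ j, lam i j * b i j = 0)
    (hbias : ∀ lam : ι → κ → R, (∀ x, ∑ i, ∑ j, lam i j * F x i j = 0) ∨
      ‖(∑ x, ψ (∑ i, ∑ j, lam i j * F x i j)) / Nat.card X‖ < ε) :
    |(Nat.card {x // F x = b} : ℝ) / Nat.card X -
        Nat.card {lam : ι → κ → R // ∀ x, ∑ i, ∑ j, lam i j * F x i j = 0} /
          Nat.card (ι → κ → R)| ≤ ε := by
  have hX : (0 : ℝ) < Nat.card X := by exact_mod_cast Nat.card_pos
  have hN : (0 : ℝ) < Nat.card (ι → κ → R) := by exact_mod_cast Nat.card_pos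
  have h := norm_card_fiber_mul_sub_le F b hψ hε hb fun lam => (hbias lam).imp_right fun h => by
    rw [norm_div, Complex.norm_natCast, div_lt_iff₀ hX] at h
    exact h.le
  rw [div_sub_div _ _ hX.ne' hN.ne', abs_div, abs_of_pos (mul_pos hX hN),
    div_le_iff₀ (mul_pos hX hN), ← Real.norm_eq_abs, ← Complex.norm_real]
  push_cast
  rw [mul_comm (Nat.card X : ℂ)]
  linarith

end FourierCounting

theorem sum_finrank_span_range_le {K ι κ : Type*} {M : ι → Type*} [DivisionRing K]
    [∀ i, AddCommGroup (M i)] [∀ i, Module K (M i)] [Fintype ι] [Fintype κ]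
    (v : ∀ i, κ → M i) :
    ∑ i, Module.finrank K (Submodule.span K (Set.range (v i))) ≤
      Fintype.card κ * Fintype.card ι := by
  simpa [mul_comm, Set.finrank] using
    sum_le_sum fun i (_ : i ∈ univ) => finrank_range_le_card (R := K) (v i)

theorem sum_row_mul_eq_zero_of_rowwise {R ι κ X : Type*} [NonUnitalNonAssocSemiring R]
    [Fintype ι] [DecidableEq ι] [Fintype κ] (F : X → ι → κ → R) (T : ι → (κ → R) → Prop)
    (hT : ∀ i, T i 0)
    (hvan : ∀ lam : ι → κ → R, (∀ i, T i (lam i)) → ∀ x, ∑ i, ∑ j, lam i j * F x i j = 0)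
    {lam : ι → κ → R} (hlam : ∀ i, T i (lam i)) (x : X) (i : ι) :
    ∑ j, lam i j * F x i j = 0 := by
  have h := hvan (Pi.single i (lam i)) (fun i' => by
    rcases eq_or_ne i' i with rfl | hne
    · simpa using hlam i'
    · simpa [hne] using hT i') x
  rwa [sum_eq_single i (fun i' _ hne => by simp [hne]) (by simp), Pi.single_eq_same] at h

theorem pattern_density_general {p n C ℓ m : ℕ} [Fact p.Prime]
    (ε : ℝ) (hε : ε ∈ Set.Ioo (0 : ℝ) 1)
    (a : Fin m → Fin ℓ → ZMod p)
    (P : Fin C → (Fin n → ZMod p) → ZMod p)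
    (d : Fin C → ℕ)
    (s : ℕ)
    (hs : s = ∑ i, Module.finrank (ZMod p)
      (Submodule.span (ZMod p) (Set.range fun j => tpow (p := p) (d i) (a j))))
    (hbias : ∀ lam : Fin C → Fin m → ZMod p,
      (∀ x : Fin ℓ → Fin n → ZMod p,
          ∑ i, ∑ j, lam i j * P i (fun t => ∑ k, a j k * x k t) = 0) ∨
      ‖(∑ x : Fin ℓ → Fin n → ZMod p,
          chi p (∑ i, ∑ j, lam i j * P i (fun t => ∑ k, a j k * x k t))) /
            ((p : ℂ) ^ (n * ℓ))‖ < ε)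
    (hzero : ∀ lam : Fin C → Fin m → ZMod p,
      (∀ x : Fin ℓ → Fin n → ZMod p,
          ∑ i, ∑ j, lam i j * P i (fun t => ∑ k, a j k * x k t) = 0) ↔
        ∀ i, ∑ j, lam i j • tpow (p := p) (d i) (a j) = 0)
    (hcount : Nat.card {lam : Fin C → Fin m → ZMod p //
        ∀ x : Fin ℓ → Fin n → ZMod p,
          ∑ i, ∑ j, lam i j * P i (fun t => ∑ k, a j k * x k t) = 0}
      = p ^ (m * C - s))
    (b : Fin m → Fin C → ZMod p) :
    (Consistent a d b →
      |(Nat.card {x : Fin ℓ → Fin n → ZMod p //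
            ∀ j i, P i (fun t => ∑ k, a j k * x k t) = b j i} : ℝ) / (p : ℝ) ^ (n * ℓ)
          - 1 / (p : ℝ) ^ s| ≤ ε)
    ∧ (¬ Consistent a d b →
      (Nat.card {x : Fin ℓ → Fin n → ZMod p //
          ∀ j i, P i (fun t => ∑ k, a j k * x k t) = b j i} : ℝ) / (p : ℝ) ^ (n * ℓ) = 0) := by
  set F : (Fin ℓ → Fin n → ZMod p) → Fin C → Fin m → ZMod p :=
    fun x i j => P i (fun t => ∑ k, a j k * x k t)
  have hfiber : Nat.card {x : Fin ℓ → Fin n → ZMod p //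
      ∀ j i, P i (fun t => ∑ k, a j k * x k t) = b j i} = Nat.card {x // F x = fun i j => b j i} :=
    Nat.card_congr <| Equiv.subtypeEquivRight fun x => by
      simp only [F, funext_iff]
      exact forall_comm
  rw [hfiber]
  refine ⟨fun hb => ?_, fun hb => ?_⟩
  · have hcard (k l : ℕ) : Nat.card (Fin k → Fin l → ZMod p) = p ^ (l * k) := by
      simp [← pow_mul]
    have hsle : s ≤ m * C := by
      simpa [hs] using sum_finrank_span_range_le (K := ZMod p) fun i j => tpow (p := p) (d i) (a j)
    have h := abs_card_fiber_div_sub_le F (fun i j => b j i) (ZMod.isPrimitive_stdAddChar p)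
      hε.1.le (fun lam hlam => sum_eq_zero fun i _ => hb lam ((hzero lam).1 hlam) i)
      (by simpa only [chi_eq_stdAddChar, hcard, Nat.cast_pow] using hbias)
    have hp : (p : ℝ) ≠ 0 := Nat.cast_ne_zero.2 (NeZero.ne p)
    have hdensity : (1 : ℝ) / p ^ s = p ^ (m * C - s) / p ^ (m * C) := by
      rw [pow_sub₀ _ hp hsle]
      field_simp
    rw [hcount, hcard, hcard] at h
    push_cast at h
    rwa [hdensity]
  · have hempty : IsEmpty {x // F x = fun i j => b j i} := ⟨fun ⟨x, hx⟩ => hb fun lam hlam i => by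
      simpa [hx] using sum_row_mul_eq_zero_of_rowwise F
        (fun i r => ∑ j, r j • tpow (d i) (a j) = 0) (by simp) (fun lam => (hzero lam).2) hlam x i⟩
    simp

/-- Near-orthogonality counting of cell patterns: under the bias hypothesis on nonvanishing
combinations `P_Λ` and the characterization and count of the vanishing `Λ`'s, the probability
that `𝓑(a_j(x)) = b_j` for all `j` is `p^{-s} ± ε` when `b₁,…,b_m` are consistent, and `0`
otherwise. -/
theorem pattern_density {p n C ℓ m : ℕ} [Fact p.Prime] (hℓ : 0 < ℓ)
    (ε : ℝ) (hε : ε ∈ Set.Ioo (0 : ℝ) 1)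
    (a : Fin m → Fin ℓ → ZMod p) (hcoef1 : ∀ j : Fin m, a j ⟨0, hℓ⟩ = 1)
    (P : Fin C → (Fin n → ZMod p) → ZMod p)
    (d : Fin C → ℕ) (hd : ∀ i, 0 < d i) (hdp : ∀ i, d i < p)
    (s : ℕ)
    (hs : s = ∑ i, Module.finrank (ZMod p)
      (Submodule.span (ZMod p) (Set.range fun j => tpow (p := p) (d i) (a j))))
    (hbias : ∀ lam : Fin C → Fin m → ZMod p,
      (∀ x : Fin ℓ → Fin n → ZMod p,
          ∑ i, ∑ j, lam i j * P i (fun t => ∑ k, a j k * x k t) = 0) ∨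
      ‖(∑ x : Fin ℓ → Fin n → ZMod p,
          chi p (∑ i, ∑ j, lam i j * P i (fun t => ∑ k, a j k * x k t))) /
            ((p : ℂ) ^ (n * ℓ))‖ < ε)
    (hzero : ∀ lam : Fin C → Fin m → ZMod p,
      (∀ x : Fin ℓ → Fin n → ZMod p,
          ∑ i, ∑ j, lam i j * P i (fun t => ∑ k, a j k * x k t) = 0) ↔
        ∀ i, ∑ j, lam i j • tpow (p := p) (d i) (a j) = 0)
    (hcount : Nat.card {lam : Fin C → Fin m → ZMod p //
        ∀ x : Fin ℓ → Fin n → ZMod p,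
          ∑ i, ∑ j, lam i j * P i (fun t => ∑ k, a j k * x k t) = 0}
      = p ^ (m * C - s))
    (b : Fin m → Fin C → ZMod p) :
    (Consistent a d b →
      |(Nat.card {x : Fin ℓ → Fin n → ZMod p //
            ∀ j i, P i (fun t => ∑ k, a j k * x k t) = b j i} : ℝ) / (p : ℝ) ^ (n * ℓ)
          - 1 / (p : ℝ) ^ s| ≤ ε)
    ∧ (¬ Consistent a d b →
      (Nat.card {x : Fin ℓ → Fin n → ZMod p //
          ∀ j i, P i (fun t => ∑ k, a j k * x k t) = b j i} : ℝ) / (p : ℝ) ^ (n * ℓ) = 0) :=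
  pattern_density_general ε hε a P d s hs hbias hzero hcount b
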